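/- Let V and E be finite types with source and range maps s, r : E → V and an involution γ ↦ γ̃ on E satisfying s(γ̃) = r(γ) and r(γ̃) = s(γ), let φ : V → ℝ be strictly positive, fix a base vertex * ∈ V, and suppose β ∈ ℝ satisfies the Perron–Frobenius eigenvalue equation Σ_{γ ∈ E, s(γ) = v} φ(r(γ)) = β·φ(v) for every v ∈ V. With Path_m, the cup matrices M_{∪^{(i)}} and the cap matrices M_{∩^{(i)}} = (M_{∪^{(i)}})ᵀ defined as in the cup–cap setting, one has M_{∪^{(i)}} · M_{∩^{(i)}} = β·1, the scalar β times the identity matrix on Path_m; i.e. a closed loop evaluates to the Perron–Frobenius eigenvalue β (which is [3] for an SU(3) ADE graph). -/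

import Mathlib

/-! Each column of the cup matrix has at most one nonzero entry, since erasing the cup from
a path `b` recovers the path `a` it was inserted into; hence `M_∪ M_∪ᵀ` is diagonal. The paths
`b` obtained from `a` by a cup at a given position correspond to the edges `γ` leaving the vertex
`v` of `a` at that position, and `M_∪ a b ^ 2 = φ (r γ) / φ v`. So the diagonal entry at `a` is
`∑_{s γ = v} φ (r γ) / φ v = β` by the Perron–Frobenius equation. -/

open Matrix

/-- Paths of length `n` on a graph with edge set `E`, source/range maps `s, r`,
starting at the base vertex `v₀`. -/
abbrev GraphPath {V E : Type*} (s r : E → V) (v₀ : V) (n : ℕ) : Type _ :=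
  {γ : Fin n → E //
    (∀ hn : 0 < n, s (γ ⟨0, hn⟩) = v₀) ∧
    ∀ (k : ℕ) (hk : k + 1 < n), s (γ ⟨k + 1, hk⟩) = r (γ ⟨k, Nat.lt_of_succ_lt hk⟩)}

open Finset

theorem Matrix.mul_transpose_eq_diagonal {ι κ R : Type*} [Fintype κ] [DecidableEq ι]
    [NonUnitalNonAssocSemiring R] (M : Matrix ι κ R)
    (hM : ∀ a a' b, M a b ≠ 0 → M a' b ≠ 0 → a = a') :
    M * Mᵀ = diagonal fun a => ∑ b, M a b * M a b := by
  ext a a'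
  rw [mul_apply, diagonal_apply]
  split_ifs with h
  · subst h; rfl
  · refine sum_eq_zero fun b _ => ?_
    by_contra hne
    exact h (hM a a' b (left_ne_zero_of_mul hne) (right_ne_zero_of_mul hne))

section InsertCup

variable {E : Type*} (rev : E → E) {m : ℕ}

/-- `γ` and `rev γ` occupy the `0`-based positions `p` and `p + 1`; the paper's cup `∪^{(i)}`
has `p = i - 1`. -/
def insertCup (p : Fin (m + 1)) (a : Fin m → E) (γ : E) : Fin (m + 2) → E := fun j =>
  if _ : (j : ℕ) < p then a ⟨j, by omega⟩
  else if _ : (j : ℕ) = p then γ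
  else if _ : (j : ℕ) = p + 1 then rev γ
  else a ⟨j - 2, by omega⟩

variable {rev} {p : Fin (m + 1)} {a : Fin m → E} {γ : E}

theorem insertCup_of_lt {j : ℕ} {hj : j < m + 2} (h : j < p) :
    insertCup rev p a γ ⟨j, hj⟩ = a ⟨j, by omega⟩ := by
  simp [insertCup, h]

theorem insertCup_of_eq {j : ℕ} {hj : j < m + 2} (h : j = p) :
    insertCup rev p a γ ⟨j, hj⟩ = γ := by
  simp [insertCup, h]

theorem insertCup_of_eq_succ {j : ℕ} {hj : j < m + 2} (h : j = p + 1) :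
    insertCup rev p a γ ⟨j, hj⟩ = rev γ := by
  simp [insertCup, h]

theorem insertCup_of_gt {j : ℕ} {hj : j < m + 2} (h : p + 1 < j) :
    insertCup rev p a γ ⟨j, hj⟩ = a ⟨j - 2, by omega⟩ := by
  simp [insertCup, show ¬ j < p by omega, show j ≠ p by omega, show j ≠ p + 1 by omega]

@[simp]
theorem insertCup_castSucc : insertCup rev p a γ p.castSucc = γ :=
  insertCup_of_eq rfl

theorem insertCup_left_injective {a' : Fin m → E} {γ' : E}
    (h : insertCup rev p a γ = insertCup rev p a' γ') : a = a' := by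
  funext ⟨k, hk⟩
  rcases lt_or_ge k p with hkp | hkp
  · have := congrFun h ⟨k, by omega⟩
    rwa [insertCup_of_lt hkp, insertCup_of_lt hkp] at this
  · have := congrFun h ⟨k + 2, by omega⟩
    rwa [insertCup_of_gt (by omega), insertCup_of_gt (by omega)] at this

variable (rev) in
def IsCupInsertion (p : Fin (m + 1)) (a : Fin m → E) (b : Fin (m + 2) → E) : Prop :=
  b = insertCup rev p a (b p.castSucc)

theorem isCupInsertion_insertCup : IsCupInsertion rev p a (insertCup rev p a γ) := by
  rw [IsCupInsertion, insertCup_castSucc]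

theorem IsCupInsertion.left_unique {a' : Fin m → E} {b : Fin (m + 2) → E}
    (h : IsCupInsertion rev p a b) (h' : IsCupInsertion rev p a' b) : a = a' :=
  insertCup_left_injective (h.symm.trans h')

theorem isCupInsertion_iff {i : ℕ} (hi1 : 1 ≤ i) (hi2 : i ≤ m + 1) (a : Fin m → E)
    (b : Fin (m + 2) → E) :
    IsCupInsertion rev ⟨i - 1, Nat.sub_one_lt_of_le hi1 hi2⟩ a b ↔
      (∀ k : Fin m, (k : ℕ) + 1 < i → b (Fin.castLE (Nat.le_add_right m 2) k) = a k) ∧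
        b ⟨i, Nat.lt_succ_of_le hi2⟩ =
          rev (b ⟨i - 1, Nat.lt_succ_of_lt (Nat.sub_one_lt_of_le hi1 hi2)⟩) ∧
        (∀ k : Fin m, i ≤ (k : ℕ) + 1 →
          b ⟨(k : ℕ) + 2, Nat.add_lt_add_right k.isLt 2⟩ = a k) := by
  constructor
  · intro h
    refine ⟨fun k hk => ?_, ?_, fun k hk => ?_⟩
    · exact (congrFun h _).trans (insertCup_of_lt (j := k) (by dsimp only; omega))
    · exact (congrFun h _).trans (insertCup_of_eq_succ (by dsimp only; omega))
    · exact (congrFun h _).trans (insertCup_of_gt (by dsimp only; omega))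
  · rintro ⟨hlt, hcup, hgt⟩
    funext ⟨j, hj⟩
    rcases lt_trichotomy j (i - 1) with hji | rfl | hji
    · rw [insertCup_of_lt hji]
      exact hlt ⟨j, by omega⟩ (by dsimp only; omega)
    · rw [insertCup_of_eq rfl]
      rfl
    · rcases eq_or_lt_of_le (Nat.succ_le_of_lt hji) with hji | hji
      · obtain rfl : j = i := by omega
        rw [insertCup_of_eq_succ (by dsimp only; omega)]
        exact hcup
      · rw [insertCup_of_gt (by dsimp only; omega)]
        convert hgt ⟨j - 2, by omega⟩ (by dsimp only; omega) using 3
        dsimp only; omega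

end InsertCup

section Paths

variable {V E : Type*} {s r : E → V} {v₀ : V} {rev : E → E} {m n : ℕ}

def pathVertices (v₀ : V) (r : E → V) (a : Fin n → E) : Fin (n + 1) → V :=
  Fin.cons v₀ fun j => r (a j)

theorem pathVertices_of_val_eq_zero {a : Fin n → E} {q : Fin (n + 1)}
    (h : (q : ℕ) = 0) : pathVertices v₀ r a q = v₀ := by
  obtain ⟨_, _⟩ := q
  subst h
  rfl

theorem pathVertices_of_val_eq_succ {a : Fin n → E} {q : Fin (n + 1)} {k : ℕ}
    (hk : k < n) (h : (q : ℕ) = k + 1) : pathVertices v₀ r a q = r (a ⟨k, hk⟩) := by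
  obtain ⟨_, _⟩ := q
  subst h
  rfl

namespace GraphPath

theorem source_eq_range (a : GraphPath s r v₀ n) {j k : ℕ} (hj : j < n) (hk : k < n)
    (h : j = k + 1) : s (a.1 ⟨j, hj⟩) = r (a.1 ⟨k, hk⟩) := by
  subst h
  exact a.2.2 k hj

theorem source_eq_pathVertices (a : GraphPath s r v₀ n) {j : ℕ} (hj : j < n) {q : Fin (n + 1)}
    (h : j = q) : s (a.1 ⟨j, hj⟩) = pathVertices v₀ r a.1 q := by
  rcases j with _ | k
  · rw [pathVertices_of_val_eq_zero h.symm]; exact a.2.1 hj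
  · rw [pathVertices_of_val_eq_succ (by omega) h.symm]; exact a.2.2 k hj

theorem source_eq_pathVertices_of_isCupInsertion {a : Fin m → E}
    {b : GraphPath s r v₀ (m + 2)} {p : Fin (m + 1)} (h : IsCupInsertion rev p a b.1) :
    s (b.1 p.castSucc) = pathVertices v₀ r a p := by
  refine (b.source_eq_pathVertices (q := p.castSucc.castSucc) p.castSucc.isLt rfl).trans ?_
  rcases Nat.eq_zero_or_pos p with hp | hp
  · rw [pathVertices_of_val_eq_zero (q := p.castSucc.castSucc) hp,
      pathVertices_of_val_eq_zero hp]
  · obtain ⟨k, hk⟩ : ∃ k, (p : ℕ) = k + 1 := ⟨p - 1, by omega⟩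
    rw [pathVertices_of_val_eq_succ (q := p.castSucc.castSucc) (by omega) hk,
      pathVertices_of_val_eq_succ (by omega) hk]
    exact congrArg r ((congrFun h _).trans (insertCup_of_lt (by omega)))

variable (hsrev : ∀ γ, s (rev γ) = r γ) (hrrev : ∀ γ, r (rev γ) = s γ)
include hsrev hrrev

def insertCup (a : GraphPath s r v₀ m) (p : Fin (m + 1)) (γ : E)
    (hγ : s γ = pathVertices v₀ r a.1 p) : GraphPath s r v₀ (m + 2) := by
  refine ⟨_root_.insertCup rev p a.1 γ, fun _ => ?_, fun k hk => ?_⟩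
  · rcases Nat.eq_zero_or_pos p with hp0 | hp0
    · rw [insertCup_of_eq hp0.symm, hγ, pathVertices_of_val_eq_zero hp0]
    · rw [insertCup_of_lt hp0]; exact a.2.1 (by omega)
  · rcases lt_trichotomy (k + 1) p with hkp | hkp | hkp
    · rw [insertCup_of_lt hkp, insertCup_of_lt (by omega)]
      exact a.2.2 k (by omega)
    · rw [insertCup_of_eq hkp, insertCup_of_lt (by omega), hγ,
        pathVertices_of_val_eq_succ (by omega) hkp.symm]
    rcases Nat.lt_or_ge (k + 1) (p + 2) with hkp' | hkp'
    · rw [insertCup_of_eq_succ (by omega), insertCup_of_eq (by omega)]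
      exact hsrev γ
    rcases Nat.lt_or_ge (k + 1) (p + 3) with hkp'' | hkp''
    · rw [insertCup_of_gt (by omega), insertCup_of_eq_succ (by omega), hrrev, hγ]
      exact a.source_eq_pathVertices _ (by omega)
    · rw [insertCup_of_gt (by omega), insertCup_of_gt (by omega)]
      exact a.source_eq_range _ _ (by omega)

open Classical in
theorem sum_isCupInsertion [Fintype E] [DecidableEq V] [Fintype (GraphPath s r v₀ (m + 2))]
    {M : Type*} [AddCommMonoid M] (f : E → M) (a : GraphPath s r v₀ m) (p : Fin (m + 1)) :
    ∑ b : GraphPath s r v₀ (m + 2) with IsCupInsertion rev p a.1 b.1, f (b.1 p.castSucc) =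
      ∑ γ with s γ = pathVertices v₀ r a.1 p, f γ := by
  refine sum_bij' (fun b _ => b.1 p.castSucc)
    (fun γ hγ => a.insertCup hsrev hrrev p γ (mem_filter.1 hγ).2) (fun b hb => ?_)
    (fun γ _ => mem_filter.2 ⟨mem_univ _, isCupInsertion_insertCup⟩)
    (fun b hb => Subtype.ext (mem_filter.1 hb).2.symm) (fun γ _ => insertCup_castSucc)
    (fun _ _ => rfl)
  exact mem_filter.2 ⟨mem_univ _, source_eq_pathVertices_of_isCupInsertion (mem_filter.1 hb).2⟩

end GraphPath

end Paths

section CupMatrix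

variable {V E : Type*} (s r : E → V) (v₀ : V) (rev : E → E) (φ : V → ℝ) {m : ℕ}

open Classical in
noncomputable def cupMatrix (p : Fin (m + 1)) :
    Matrix (GraphPath s r v₀ m) (GraphPath s r v₀ (m + 2)) ℝ := fun a b =>
  if IsCupInsertion rev p a.1 b.1 then √(φ (r (b.1 p.castSucc)) / φ (s (b.1 p.castSucc))) else 0

variable {s r v₀ rev φ}

theorem isCupInsertion_of_cupMatrix_ne_zero {p : Fin (m + 1)} {a : GraphPath s r v₀ m}
    {b : GraphPath s r v₀ (m + 2)} (h : cupMatrix s r v₀ rev φ p a b ≠ 0) :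
    IsCupInsertion rev p a.1 b.1 := by
  by_contra hab
  exact h (if_neg hab)

theorem cupMatrix_mul_transpose [Fintype E] [DecidableEq V]
    [Fintype (GraphPath s r v₀ (m + 2))] [DecidableEq (GraphPath s r v₀ m)]
    (hsrev : ∀ γ, s (rev γ) = r γ) (hrrev : ∀ γ, r (rev γ) = s γ)
    (hφ : ∀ v, 0 < φ v) {β : ℝ}
    (hPF : ∀ v : V, ∑ γ ∈ Finset.univ.filter (fun γ => s γ = v), φ (r γ) = β * φ v)
    (p : Fin (m + 1)) :
    cupMatrix s r v₀ rev φ p * (cupMatrix s r v₀ rev φ p)ᵀ = β • 1 := by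
  classical
  have hcol : ∀ a a' b, cupMatrix s r v₀ rev φ p a b ≠ 0 →
      cupMatrix s r v₀ rev φ p a' b ≠ 0 → a = a' := fun a a' b ha ha' =>
    Subtype.ext ((isCupInsertion_of_cupMatrix_ne_zero ha).left_unique
      (isCupInsertion_of_cupMatrix_ne_zero ha'))
  rw [mul_transpose_eq_diagonal _ hcol, smul_one_eq_diagonal]
  congr 1
  funext a
  set v := pathVertices v₀ r a.1 p
  calc ∑ b, cupMatrix s r v₀ rev φ p a b * cupMatrix s r v₀ rev φ p a b
      = ∑ b : GraphPath s r v₀ (m + 2) with IsCupInsertion rev p a.1 b.1,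
          φ (r (b.1 p.castSucc)) / φ (s (b.1 p.castSucc)) := by
        rw [sum_filter]
        refine sum_congr rfl fun b _ => ?_
        unfold cupMatrix
        split_ifs
        exacts [Real.mul_self_sqrt (div_nonneg (hφ _).le (hφ _).le), zero_mul 0]
    _ = ∑ b : GraphPath s r v₀ (m + 2) with IsCupInsertion rev p a.1 b.1,
          φ (r (b.1 p.castSucc)) / φ v :=
        sum_congr rfl fun b hb => by
          rw [GraphPath.source_eq_pathVertices_of_isCupInsertion (mem_filter.1 hb).2]
    _ = ∑ γ with s γ = v, φ (r γ) / φ v :=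
        GraphPath.sum_isCupInsertion hsrev hrrev (fun γ => φ (r γ) / φ v) a p
    _ = β := by rw [← sum_div, hPF, mul_div_cancel_right₀ _ (hφ v).ne']

end CupMatrix

/-- a closed loop evaluates to the Perron–Frobenius eigenvalue:
`M_{∪^{(i)}} · M_{∩^{(i)}} = β · 1`, where `M_{∩^{(i)}} = M_{∪^{(i)}}ᵀ`. -/
theorem closed_loop_eq_PF_eigenvalue {V E : Type*} [Fintype E] [DecidableEq V]
    (s r : E → V) (rev : E → E)
    (hsrev : ∀ γ, s (rev γ) = r γ) (hrrev : ∀ γ, r (rev γ) = s γ)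
    (φ : V → ℝ) (hφ : ∀ v, 0 < φ v) (v₀ : V) (β : ℝ)
    (hPF : ∀ v : V, ∑ γ ∈ Finset.univ.filter (fun γ => s γ = v), φ (r γ) = β * φ v)
    (m : ℕ)
    [Fintype (GraphPath s r v₀ (m + 2))]
    [DecidableEq (GraphPath s r v₀ m)]
    (Mcup : ℕ → Matrix (GraphPath s r v₀ m) (GraphPath s r v₀ (m + 2)) ℝ)
    (hM : ∀ (i : ℕ) (hi1 : 1 ≤ i) (hi2 : i ≤ m + 1)
        (α : GraphPath s r v₀ m) (β' : GraphPath s r v₀ (m + 2)),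
      (((∀ k : Fin m, (k : ℕ) + 1 < i → β'.1 (Fin.castLE (by omega) k) = α.1 k) ∧
        β'.1 ⟨i, by omega⟩ = rev (β'.1 ⟨i - 1, by omega⟩) ∧
        (∀ k : Fin m, i ≤ (k : ℕ) + 1 → β'.1 ⟨(k : ℕ) + 2, by omega⟩ = α.1 k)) →
          Mcup i α β' =
            Real.sqrt (φ (r (β'.1 ⟨i - 1, by omega⟩)) / φ (s (β'.1 ⟨i - 1, by omega⟩)))) ∧
      (¬ ((∀ k : Fin m, (k : ℕ) + 1 < i → β'.1 (Fin.castLE (by omega) k) = α.1 k) ∧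
          β'.1 ⟨i, by omega⟩ = rev (β'.1 ⟨i - 1, by omega⟩) ∧
          (∀ k : Fin m, i ≤ (k : ℕ) + 1 → β'.1 ⟨(k : ℕ) + 2, by omega⟩ = α.1 k)) →
            Mcup i α β' = 0)) :
    ∀ (i : ℕ), 1 ≤ i → i ≤ m + 1 →
      Mcup i * (Mcup i)ᵀ = β • (1 : Matrix (GraphPath s r v₀ m) (GraphPath s r v₀ m) ℝ) := by
  intro i hi1 hi2
  have hMcup : Mcup i = cupMatrix s r v₀ rev φ ⟨i - 1, by omega⟩ := by
    ext a b
    have hab := isCupInsertion_iff (rev := rev) hi1 hi2 a.1 b.1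
    obtain ⟨hcup, hzero⟩ := hM i hi1 hi2 a b
    unfold cupMatrix
    split_ifs with h
    exacts [hcup (hab.1 h), hzero (mt hab.2 h)]
  rw [hMcup]
  exact cupMatrix_mul_transpose hsrev hrrev hφ hPF _
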